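/- arXiv:1301.1639 — 7 statements merged into one kernel-verified Lean document; each statement's English description precedes it below -/
import Mathlib

section
/- Let λ ∈ ℂ with λ ≠ 0, let R : ℂ × ℂ → ℂ be continuous, let γ : [0,1] → ℂ be continuously differentiable, and let w : [0,1] → ℂ be differentiable with w'(t) = γ'(t)·(1 + R(exp(γ(t)), exp(w(t))))/λ for all t ∈ [0,1]. Then exp(w(1) − γ(1)/λ) = exp(w(0) − γ(0)/λ) · exp( (1/λ)·∫₀¹ R(exp(γ(t)), exp(w(t)))·γ'(t) dt ). (This is the relation D_R = D₀ × exp ∫ R τ between the Dulac map of X_R and that of the linear model X₀.) -/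
/-! Along a tangent path the difference `w − γ/λ` between the lift and the linear-model lift
has derivative `R(exp γ, exp w)·γ'/λ`, so the fundamental theorem of calculus gives it as an
integral, and exponentiating turns the sum into the product. -/

open Set intervalIntegral

theorem Complex.exp_eq_exp_mul_exp_integral {u u' : ℝ → ℂ} {a b : ℝ}
    (hu : ∀ t ∈ uIcc a b, HasDerivAt u (u' t) t)
    (hint : IntervalIntegrable u' MeasureTheory.volume a b) :
    Complex.exp (u b) = Complex.exp (u a) * Complex.exp (∫ t in a..b, u' t) := by
  rw [← Complex.exp_add, integral_eq_sub_of_hasDerivAt hu hint, add_sub_cancel]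

theorem hasDerivAt_sub_div_of_tangent {γ w : ℝ → ℂ} {c ρ lam : ℂ} {t : ℝ}
    (hγ : HasDerivAt γ c t) (hw : HasDerivAt w (c * (1 + ρ) / lam) t) :
    HasDerivAt (fun s => w s - γ s / lam) (ρ * c / lam) t :=
  (hw.sub (hγ.div_const lam)).congr_deriv (by ring)

theorem dulac_vs_linear_model_general
    (lam : ℂ)
    (R : ℂ × ℂ → ℂ) (hR : Continuous R)
    (γ γ' : ℝ → ℂ)
    (hγ : ∀ t ∈ Set.Icc (0:ℝ) 1, HasDerivAt γ (γ' t) t)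
    (hγ' : ContinuousOn γ' (Set.Icc (0:ℝ) 1))
    (w : ℝ → ℂ)
    (hw : ∀ t ∈ Set.Icc (0:ℝ) 1,
      HasDerivAt w (γ' t * (1 + R (Complex.exp (γ t), Complex.exp (w t))) / lam) t) :
    Complex.exp (w 1 - γ 1 / lam)
      = Complex.exp (w 0 - γ 0 / lam)
        * Complex.exp ((1 / lam) * ∫ t in (0:ℝ)..1,
            R (Complex.exp (γ t), Complex.exp (w t)) * γ' t) := by
  have hγc : ContinuousOn γ (Icc 0 1) := fun t ht => (hγ t ht).continuousAt.continuousWithinAt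
  have hwc : ContinuousOn w (Icc 0 1) := fun t ht => (hw t ht).continuousAt.continuousWithinAt
  have hcont : ContinuousOn (fun t => R (Complex.exp (γ t), Complex.exp (w t)) * γ' t / lam)
      (Icc 0 1) :=
    ((hR.comp_continuousOn ((Complex.continuous_exp.comp_continuousOn hγc).prodMk
      (Complex.continuous_exp.comp_continuousOn hwc))).mul hγ').div_const lam
  rw [one_div_mul_eq_div, ← integral_div]
  refine Complex.exp_eq_exp_mul_exp_integral (u := fun s => w s - γ s / lam) (fun t ht => ?_)
    (hcont.intervalIntegrable_of_Icc zero_le_one)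
  rw [uIcc_of_le zero_le_one] at ht
  exact hasDerivAt_sub_div_of_tangent (hγ t ht) (hw t ht)

/-- The relation `D_R = D₀ × exp ∫ R τ` between the Dulac map of `X_R` and that of
the linear model `X₀`, in logarithmic coordinates: along a tangent path,
`exp(w(1) − γ(1)/λ) = exp(w(0) − γ(0)/λ) · exp((1/λ)∫₀¹ R(exp γ, exp w)·γ')`. -/
theorem dulac_vs_linear_model
    (lam : ℂ) (hlam : lam ≠ 0)
    (R : ℂ × ℂ → ℂ) (hR : Continuous R)
    (γ γ' : ℝ → ℂ)
    (hγ : ∀ t ∈ Set.Icc (0:ℝ) 1, HasDerivAt γ (γ' t) t)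
    (hγ' : ContinuousOn γ' (Set.Icc (0:ℝ) 1))
    (w : ℝ → ℂ)
    (hw : ∀ t ∈ Set.Icc (0:ℝ) 1,
      HasDerivAt w (γ' t * (1 + R (Complex.exp (γ t), Complex.exp (w t))) / lam) t) :
    Complex.exp (w 1 - γ 1 / lam)
      = Complex.exp (w 0 - γ 0 / lam)
        * Complex.exp ((1 / lam) * ∫ t in (0:ℝ)..1,
            R (Complex.exp (γ t), Complex.exp (w t)) * γ' t) :=
  dulac_vs_linear_model_general lam R hR γ γ' hγ hγ' w hw
end

section
/- Let λ ∈ ℂ with λ ≠ 0, let a be a positive integer, let N_R ≥ 0, let z₀ ∈ ℂ, let θ ∈ ℂ with |θ| = 1 and Re θ ≠ 0, and let T > 0. Let R : ℂ × ℂ → ℂ be continuous and let w : [0,T] → ℂ be differentiable with w'(t) = (θ/λ)·(1 + R(exp(z₀ + tθ), exp(w(t)))) for all t ∈ [0,T], and assume |R(exp(z₀ + tθ), exp(w(t)))| ≤ N_R·exp(a·Re(z₀ + tθ)) for all t ∈ [0,T]. Then for every t ∈ [0,T]: |w(t) − w(0) − t·θ/λ| ≤ (exp(a·Re z₀)·N_R)/(|λ|·|Re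 θ|·a) · |1 − exp(a·t·Re θ)|. -/
/-!
Along the lift, `w t - t θ / λ` has derivative `(θ / λ) R(…)`, whose norm is at most
`K exp (c s)` with `K = exp (a Re z₀) N_R / |λ|` and `c = a Re θ`. The mean value inequality,
with the primitive `K / c (exp (c s) - 1)` of this bound as comparison function, gives the estimate.
-/

open Set Real

theorem norm_sub_le_of_norm_deriv_le_mul_exp {E : Type*} [NormedAddCommGroup E]
    [NormedSpace ℝ E] {f f' : ℝ → E} {K c T : ℝ} (hc : c ≠ 0)
    (hf : ∀ s ∈ Icc 0 T, HasDerivAt f (f' s) s)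
    (bound : ∀ s ∈ Icc 0 T, ‖f' s‖ ≤ K * exp (c * s)) :
    ∀ t ∈ Icc 0 T, ‖f t - f 0‖ ≤ K / c * (exp (c * t) - 1) := by
  have hB (s : ℝ) : HasDerivAt (fun s => K / c * (exp (c * s) - 1)) (K * exp (c * s)) s := by
    refine ((((hasDerivAt_id s).const_mul c).exp.sub_const 1).const_mul (K / c)).congr_deriv ?_
    field_simp
    simp
  refine image_norm_le_of_norm_deriv_right_le_deriv_boundary
    (fun s hs => (hf s hs).continuousAt.continuousWithinAt.sub continuousWithinAt_const)
    (fun s hs => ((hf s (Ico_subset_Icc_self hs)).sub_const (f 0)).hasDerivWithinAt)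
    (by simp) hB (fun s hs => bound s (Ico_subset_Icc_self hs))

theorem div_mul_exp_mul_sub_one_eq_abs (K : ℝ) {c t : ℝ} (ht : 0 ≤ t) :
    K / c * (exp (c * t) - 1) = K / |c| * |1 - exp (c * t)| := by
  rcases lt_trichotomy c 0 with hc | rfl | hc
  · have : exp (c * t) ≤ 1 := exp_le_one_iff.mpr (mul_nonpos_of_nonpos_of_nonneg hc.le ht)
    rw [abs_of_neg hc, abs_of_nonneg (sub_nonneg.mpr this), div_neg]
    ring
  · simp
  · have : 1 ≤ exp (c * t) := one_le_exp (mul_nonneg hc.le ht)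
    rw [abs_of_pos hc, abs_of_nonpos (sub_nonpos.mpr this)]
    ring

theorem lift_growth_estimate_nonvertical_general
    (lam : ℂ)
    (a : ℕ) (ha : 0 < a)
    (NR : ℝ)
    (z₀ θ : ℂ) (hθ : ‖θ‖ = 1) (hθre : θ.re ≠ 0)
    (T : ℝ)
    (R : ℂ × ℂ → ℂ)
    (w : ℝ → ℂ)
    (hw : ∀ t ∈ Set.Icc (0:ℝ) T,
      HasDerivAt w
        (θ / lam * (1 + R (Complex.exp (z₀ + (t:ℂ) * θ), Complex.exp (w t)))) t)
    (hbound : ∀ t ∈ Set.Icc (0:ℝ) T,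
      ‖R (Complex.exp (z₀ + (t:ℂ) * θ), Complex.exp (w t))‖
        ≤ NR * Real.exp ((a : ℝ) * (z₀ + (t:ℂ) * θ).re)) :
    ∀ t ∈ Set.Icc (0:ℝ) T,
      ‖w t - w 0 - (t:ℂ) * θ / lam‖
        ≤ Real.exp ((a : ℝ) * z₀.re) * NR / (‖lam‖ * |θ.re| * (a : ℝ))
          * |1 - Real.exp ((a : ℝ) * t * θ.re)| := by
  set K := exp (a * z₀.re) * NR / ‖lam‖
  set c := (a : ℝ) * θ.re
  have hc : c ≠ 0 := mul_ne_zero (Nat.cast_ne_zero.mpr ha.ne') hθre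
  have hderiv : ∀ s ∈ Icc 0 T, HasDerivAt (fun s : ℝ => w s - s * θ / lam)
      (θ / lam * R (Complex.exp (z₀ + s * θ), Complex.exp (w s))) s := fun s hs => by
    have hray : HasDerivAt (fun s : ℝ => (s : ℂ) * θ / lam) (θ / lam) s := by
      simpa [mul_div_assoc] using (hasDerivAt_id s).ofReal_comp.mul_const (θ / lam)
    exact ((hw s hs).sub hray).congr_deriv (by ring)
  have hnorm : ∀ s ∈ Icc 0 T,
      ‖θ / lam * R (Complex.exp (z₀ + s * θ), Complex.exp (w s))‖ ≤ K * exp (c * s) :=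
    fun s hs => calc
      _ ≤ 1 / ‖lam‖ * (NR * exp (a * (z₀ + s * θ).re)) := by
          rw [norm_mul, norm_div, hθ]; gcongr; exact hbound s hs
      _ = K * exp (c * s) := by
          simp only [K, c, Complex.add_re, Complex.re_ofReal_mul, mul_add, exp_add]; ring_nf
  intro t ht
  calc ‖w t - w 0 - t * θ / lam‖ = ‖(w t - t * θ / lam) - (w 0 - (0 : ℝ) * θ / lam)‖ := by
        push_cast; ring_nf
    _ ≤ K / c * (exp (c * t) - 1) := norm_sub_le_of_norm_deriv_le_mul_exp hc hderiv hnorm t ht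
    _ = K / |c| * |1 - exp (c * t)| := div_mul_exp_mul_sub_one_eq_abs K ht.1
    _ = _ := by
        simp only [K, c, abs_mul, Nat.abs_cast, mul_right_comm _ t, div_div, mul_assoc,
          mul_comm |θ.re|]

/-- Growth estimate for the lift of a non-vertical ray `t ↦ z₀ + tθ` in the
foliation of `E^* X_R`: if `|R∘E| ≤ N_R · exp(a · Re z)` along the lift, then
`|w(t) − w(0) − tθ/λ| ≤ exp(a Re z₀)·N_R/(|λ|·|Re θ|·a) · |1 − exp(a·t·Re θ)|`. -/
theorem lift_growth_estimate_nonvertical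
    (lam : ℂ) (hlam : lam ≠ 0)
    (a : ℕ) (ha : 0 < a)
    (NR : ℝ) (hNR : 0 ≤ NR)
    (z₀ θ : ℂ) (hθ : ‖θ‖ = 1) (hθre : θ.re ≠ 0)
    (T : ℝ) (hT : 0 < T)
    (R : ℂ × ℂ → ℂ) (hR : Continuous R)
    (w : ℝ → ℂ)
    (hw : ∀ t ∈ Set.Icc (0:ℝ) T,
      HasDerivAt w
        (θ / lam * (1 + R (Complex.exp (z₀ + (t:ℂ) * θ), Complex.exp (w t)))) t)
    (hbound : ∀ t ∈ Set.Icc (0:ℝ) T,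
      ‖R (Complex.exp (z₀ + (t:ℂ) * θ), Complex.exp (w t))‖
        ≤ NR * Real.exp ((a : ℝ) * (z₀ + (t:ℂ) * θ).re)) :
    ∀ t ∈ Set.Icc (0:ℝ) T,
      ‖w t - w 0 - (t:ℂ) * θ / lam‖
        ≤ Real.exp ((a : ℝ) * z₀.re) * NR / (‖lam‖ * |θ.re| * (a : ℝ))
          * |1 - Real.exp ((a : ℝ) * t * θ.re)| :=
  lift_growth_estimate_nonvertical_general lam a ha NR z₀ θ hθ hθre T R w hw hbound
end

section
/- Let λ ∈ ℂ with λ ≠ 0, let a be a positive integer, let ρ > 0, let N_R ≥ 0, and let 0 < δ < π/2 with cos δ > N_R·ρ^a. Set ϑ := −λ/|λ| and let θ = ϑ·exp(iβ) for some real β with |β| ≤ δ. Let z₀ ∈ ℂ, T > 0, let R : ℂ × ℂ → ℂ be continuous, and let w : [0,T] → ℂ be differentiable with w'(t) = (θ/λ)·(1 + R(exp(z₀ + tθ), exp(w(t)))) for all t ∈ [0,T]; assume |R(exp(z₀ + tθ), exp(w(t)))| ≤ N_R·ρ^a for all t ∈ [0,T]. Then for every t ∈ [0,T]: d/dt Re(w(t))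 ≤ −(cos δ − N_R·ρ^a)/|λ| < 0; in particular t ↦ Re(w(t)) is strictly decreasing. (This says that the searchlight beam S(z₀, ϑ, δ) of direction ϑ = −λ/|λ| and aperture 2δ with δ < arccos(N_R ρ^a) is a stability beam.) -/
/-! Since `θ / λ = -exp(iβ) / |λ|` has norm `1 / |λ|` and real part `-cos β / |λ|`, the velocity
`θ/λ · (1 + R)` of the lift has real part at most `(-cos β + |R|) / |λ| ≤ -(cos δ - N_R ρ^a) / |λ|`,
which is negative; the mean value theorem then makes `Re w` strictly decreasing. -/

open Complex

theorem HasDerivAt.complex_re {f : ℝ → ℂ} {f' : ℂ} {x : ℝ} (h : HasDerivAt f f' x) :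
    HasDerivAt (fun s => (f s).re) f'.re x :=
  reCLM.hasFDerivAt.comp_hasDerivAt x h

theorem strictAntiOn_of_hasDerivAt_neg {D : Set ℝ} (hD : Convex ℝ D) {f f' : ℝ → ℝ}
    (hf : ∀ x ∈ D, HasDerivAt f (f' x) x) (hf' : ∀ x ∈ D, f' x < 0) : StrictAntiOn f D :=
  strictAntiOn_of_hasDerivWithinAt_neg hD
    (fun x hx => (hf x hx).continuousAt.continuousWithinAt)
    (fun x hx => (hf x (interior_subset hx)).hasDerivWithinAt)
    (fun x hx => hf' x (interior_subset hx))

theorem Real.cos_le_cos_of_abs_le {β δ : ℝ} (hβ : |β| ≤ δ) (hδ : δ ≤ Real.pi) :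
    Real.cos δ ≤ Real.cos β := by
  rw [← Real.cos_abs β]
  exact Real.cos_le_cos_of_nonneg_of_le_pi (abs_nonneg β) hδ hβ

theorem Complex.re_mul_one_add_le (c r : ℂ) : (c * (1 + r)).re ≤ c.re + ‖c‖ * ‖r‖ := by
  rw [mul_add, mul_one, add_re, ← norm_mul]
  exact add_le_add_right (re_le_norm _) _

theorem div_eq_neg_exp_div_norm {lam : ℂ} (hlam : lam ≠ 0) (β : ℝ) :
    -lam / ((‖lam‖ : ℝ) : ℂ) * exp (β * I) / lam = -exp (β * I) / ((‖lam‖ : ℝ) : ℂ) := by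
  field_simp

theorem re_lift_velocity_le {lam r : ℂ} (hlam : lam ≠ 0) {β δ N : ℝ} (hβ : |β| ≤ δ)
    (hδ : δ ≤ Real.pi) (hr : ‖r‖ ≤ N) :
    (-lam / ((‖lam‖ : ℝ) : ℂ) * exp (β * I) / lam * (1 + r)).re
      ≤ -(Real.cos δ - N) / ‖lam‖ := by
  have hlam' : 0 < ‖lam‖ := norm_pos_iff.2 hlam
  have hre : (-exp (β * I) / ((‖lam‖ : ℝ) : ℂ)).re = -Real.cos β / ‖lam‖ := by
    rw [div_ofReal_re, neg_re, exp_ofReal_mul_I_re]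
  have hnorm : ‖-exp (β * I) / ((‖lam‖ : ℝ) : ℂ)‖ = 1 / ‖lam‖ := by
    rw [norm_div, norm_neg, norm_exp_ofReal_mul_I, norm_real, Real.norm_of_nonneg hlam'.le]
  calc (-lam / ((‖lam‖ : ℝ) : ℂ) * exp (β * I) / lam * (1 + r)).re
      ≤ -Real.cos β / ‖lam‖ + 1 / ‖lam‖ * ‖r‖ := by
        rw [div_eq_neg_exp_div_norm hlam, ← hre, ← hnorm]
        exact re_mul_one_add_le _ _
    _ = (-Real.cos β + ‖r‖) / ‖lam‖ := by ring
    _ ≤ -(Real.cos δ - N) / ‖lam‖ := by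
        gcongr
        linarith [Real.cos_le_cos_of_abs_le hβ hδ]

theorem stability_beam_general
    (lam : ℂ) (hlam : lam ≠ 0)
    (a : ℕ)
    (ρ : ℝ)
    (NR : ℝ)
    (δ : ℝ) (hδπ : δ < Real.pi / 2)
    (hcos : NR * ρ ^ a < Real.cos δ)
    (β : ℝ) (hβ : |β| ≤ δ)
    (θ : ℂ) (hθ : θ = -lam / ((‖lam‖ : ℝ) : ℂ) * Complex.exp (β * Complex.I))
    (z₀ : ℂ) (T : ℝ)
    (R : ℂ × ℂ → ℂ)
    (w : ℝ → ℂ)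
    (hw : ∀ t ∈ Set.Icc (0:ℝ) T,
      HasDerivAt w
        (θ / lam * (1 + R (Complex.exp (z₀ + (t:ℂ) * θ), Complex.exp (w t)))) t)
    (hbound : ∀ t ∈ Set.Icc (0:ℝ) T,
      ‖R (Complex.exp (z₀ + (t:ℂ) * θ), Complex.exp (w t))‖
        ≤ NR * ρ ^ a) :
    (∀ t ∈ Set.Icc (0:ℝ) T, ∀ d : ℝ,
        HasDerivAt (fun s => (w s).re) d t →
          d ≤ -(Real.cos δ - NR * ρ ^ a) / ‖lam‖)
      ∧ -(Real.cos δ - NR * ρ ^ a) / ‖lam‖ < 0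
      ∧ StrictAntiOn (fun t => (w t).re) (Set.Icc (0:ℝ) T) := by
  subst hθ
  have hδ : δ ≤ Real.pi := by linarith [Real.pi_pos]
  have hle := fun t ht => re_lift_velocity_le hlam hβ hδ (hbound t ht)
  have hneg : -(Real.cos δ - NR * ρ ^ a) / ‖lam‖ < 0 :=
    div_neg_of_neg_of_pos (by linarith) (norm_pos_iff.2 hlam)
  refine ⟨fun t ht d hd => ?_, hneg, ?_⟩
  · rw [hd.unique (hw t ht).complex_re]
    exact hle t ht
  · exact strictAntiOn_of_hasDerivAt_neg (convex_Icc 0 T) (fun t ht => (hw t ht).complex_re)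
      fun t ht => (hle t ht).trans_lt hneg

/-- The searchlight beam `S(z₀, ϑ, δ)` with direction `ϑ = −λ/|λ|` and aperture
`2δ`, `cos δ > N_R·ρ^a`, is a stability beam: along the lift of any ray of
direction `θ = ϑ·exp(iβ)`, `|β| ≤ δ`, the derivative of `Re w` is at most
`−(cos δ − N_R ρ^a)/|λ| < 0`; in particular `t ↦ Re (w t)` is strictly decreasing. -/
theorem stability_beam
    (lam : ℂ) (hlam : lam ≠ 0)
    (a : ℕ) (ha : 0 < a)
    (ρ : ℝ) (hρ : 0 < ρ)
    (NR : ℝ) (hNR : 0 ≤ NR)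
    (δ : ℝ) (hδ0 : 0 < δ) (hδπ : δ < Real.pi / 2)
    (hcos : NR * ρ ^ a < Real.cos δ)
    (β : ℝ) (hβ : |β| ≤ δ)
    (θ : ℂ) (hθ : θ = -lam / ((‖lam‖ : ℝ) : ℂ) * Complex.exp (β * Complex.I))
    (z₀ : ℂ) (T : ℝ) (hT : 0 < T)
    (R : ℂ × ℂ → ℂ) (hR : Continuous R)
    (w : ℝ → ℂ)
    (hw : ∀ t ∈ Set.Icc (0:ℝ) T,
      HasDerivAt w
        (θ / lam * (1 + R (Complex.exp (z₀ + (t:ℂ) * θ), Complex.exp (w t)))) t)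
    (hbound : ∀ t ∈ Set.Icc (0:ℝ) T,
      ‖R (Complex.exp (z₀ + (t:ℂ) * θ), Complex.exp (w t))‖
        ≤ NR * ρ ^ a) :
    (∀ t ∈ Set.Icc (0:ℝ) T, ∀ d : ℝ,
        HasDerivAt (fun s => (w s).re) d t →
          d ≤ -(Real.cos δ - NR * ρ ^ a) / ‖lam‖)
      ∧ -(Real.cos δ - NR * ρ ^ a) / ‖lam‖ < 0
      ∧ StrictAntiOn (fun t => (w t).re) (Set.Icc (0:ℝ) T) :=
  stability_beam_general lam hlam a ρ NR δ hδπ hcos β hβ θ hθ z₀ T R w hw hbound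
end

section
/- Let λ ∈ ℂ with λ ≠ 0, let a be a positive integer, let ρ, r > 0, let N_R ≥ 0, and let 0 < δ < π/2 with cos δ > N_R·ρ^a. Let R be holomorphic on the polydisc {(x,y) ∈ ℂ² : |x| < ρ, |y| < r} with |R(x,y)| ≤ N_R·|x|^a there. Set ϑ := −λ/|λ| and let θ = ϑ·exp(iβ) for some real β with |β| ≤ δ. Let z₀, w₀ ∈ ℂ with Re z₀ < log ρ and Re w₀ < log r, and let T > 0 be such that Re(z₀ + tθ) < log ρ for all t ∈ [0,T]. Then there exists a differentiable w : [0,T] → ℂ with w(0) = w₀, satisfying w'(t) = (θ/λ)·(1 + R(exp(z₀ + tθ), exp(w(t)))) for all t ∈ [0,T], and such that t ↦ Re(w(t)) is strictly decreasing; in particular Re(w(t)) < log r for all t, so the whole ray segment lifts inside the domain. (Outgoing rays of a stability beam lift completely in the leaf as long as they do not cross {Re z = log ρ}.) -/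
/-!
Truncate the tangency equation so that Picard–Lindelöf applies globally: clamp the time in the
`x`-slot to `[0, T]` and the real part of `w` at some `c` with `Re w₀ < c < log r`. The truncated
field is bounded and, by the Cauchy estimate for `R(x, ·)` on a smaller disc, uniformly Lipschitz
in `w`. Its real part is negative because `θ / λ = -exp (iβ) / |λ|` and
`|R| ≤ N_R ρ^a < cos δ ≤ cos β`, so `Re w` is strictly decreasing; hence it stays below `c`,
where the truncation is inactive, and the solution solves the original equation.
-/

open Set Metric Complex NNReal

namespace Complex

def clampRe (c : ℝ) (z : ℂ) : ℂ := ⟨min z.re c, z.im⟩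

lemma clampRe_re_le (c : ℝ) (z : ℂ) : (clampRe c z).re ≤ c := min_le_right _ _

lemma clampRe_of_re_le {c : ℝ} {z : ℂ} (h : z.re ≤ c) : clampRe c z = z := by
  simp [clampRe, min_eq_left h]

lemma norm_exp_clampRe_le (c : ℝ) (z : ℂ) : ‖exp (clampRe c z)‖ ≤ Real.exp c := by
  rw [norm_exp]
  exact Real.exp_le_exp.2 (clampRe_re_le c z)

lemma lipschitzWith_clampRe (c : ℝ) : LipschitzWith 1 (clampRe c) := by
  refine LipschitzWith.of_dist_le_mul fun z w => ?_
  have hre : |min z.re c - min w.re c| ≤ |z.re - w.re| := by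
    simpa using abs_min_sub_min_le_max z.re c w.re c
  rw [NNReal.coe_one, one_mul, dist_eq_re_im, dist_eq_re_im]
  exact Real.sqrt_le_sqrt (add_le_add_left (sq_le_sq.2 hre) _)

lemma lipschitzOnWith_exp_of_re_le (c : ℝ) :
    LipschitzOnWith (Real.toNNReal (Real.exp c)) exp {z | z.re ≤ c} := by
  refine (convex_halfSpace_re_le c).lipschitzOnWith_of_nnnorm_deriv_le
    (fun z _ => differentiableAt_exp) fun z hz => ?_
  rw [deriv_exp, ← NNReal.coe_le_coe, coe_nnnorm, Real.coe_toNNReal _ (Real.exp_nonneg c),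
    norm_exp]
  exact Real.exp_le_exp.2 hz

lemma re_exp_mul_I_mul_one_add_pos {β : ℝ} {u : ℂ} (hu : ‖u‖ < Real.cos β) :
    0 < (exp (β * I) * (1 + u)).re := by
  have hre : -‖u‖ ≤ (exp (β * I) * u).re := by
    have h := abs_re_le_norm (exp (β * I) * u)
    rw [norm_mul, norm_exp_ofReal_mul_I, one_mul] at h
    exact neg_le_of_abs_le h
  rw [mul_one_add, add_re, exp_ofReal_mul_I_re]
  linarith

lemma re_neg_div_norm_mul_exp_div_mul_one_add_neg {lam : ℂ} (hlam : lam ≠ 0) {β : ℝ} {u : ℂ}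
    (hu : ‖u‖ < Real.cos β) : (-lam / (‖lam‖ : ℂ) * exp (β * I) / lam * (1 + u)).re < 0 := by
  have hnorm : (‖lam‖ : ℂ) ≠ 0 := ofReal_ne_zero.2 (norm_ne_zero_iff.2 hlam)
  have hθ : -lam / (‖lam‖ : ℂ) * exp (β * I) / lam * (1 + u)
      = -(exp (β * I) * (1 + u)) / (‖lam‖ : ℂ) := by
    field_simp
  rw [hθ, div_ofReal_re, neg_re]
  exact div_neg_of_neg_of_pos (neg_neg_of_pos (re_exp_mul_I_mul_one_add_pos hu))
    (norm_pos_iff.2 hlam)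

end Complex

lemma lipschitzOnWith_closedBall_of_differentiableOn_ball {F : Type*} [NormedAddCommGroup F]
    [NormedSpace ℂ F] {g : ℂ → F} {c : ℂ} {r r' M : ℝ} (hr' : r' < r)
    (hg : DifferentiableOn ℂ g (ball c r)) (hM : ∀ z ∈ ball c r, ‖g z‖ ≤ M) :
    LipschitzOnWith (Real.toNNReal (2 * M / (r - r'))) g (closedBall c r') := by
  have hsub : ∀ y ∈ closedBall c r', ball y (r - r') ⊆ ball c r := fun y hy =>
    ball_subset_ball' (by rw [mem_closedBall] at hy; linarith)
  have hmem : ∀ y ∈ closedBall c r', y ∈ ball c r := fun y hy =>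
    hsub y hy (mem_ball_self (by linarith))
  refine (convex_closedBall c r').lipschitzOnWith_of_nnnorm_deriv_le
    (fun y hy => hg.differentiableAt (isOpen_ball.mem_nhds (hmem y hy))) fun y hy => ?_
  rw [← NNReal.coe_le_coe, coe_nnnorm]
  refine (Complex.norm_deriv_le_div_of_mapsTo_ball (hg.mono (hsub y hy)) (fun z hz => ?_)
    (by linarith)).trans (Real.le_coe_toNNReal _)
  rw [mem_closedBall, dist_eq_norm]
  calc ‖g z - g y‖ ≤ ‖g z‖ + ‖g y‖ := norm_sub_le _ _
    _ ≤ 2 * M := by linarith [hM z (hsub y hy hz), hM y (hmem y hy)]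

section ODE

variable {E : Type*} [NormedAddCommGroup E] [NormedSpace ℝ E] [CompleteSpace E]

theorem exists_forall_mem_Ioo_hasDerivAt_of_lipschitzWith_of_norm_le {f : ℝ → E → E}
    {tmin tmax : ℝ} (t₀ : Icc tmin tmax) (x₀ : E) {K : ℝ≥0} {L : ℝ}
    (hlip : ∀ t, LipschitzWith K (f t)) (hcont : ∀ x, Continuous (f · x))
    (hnorm : ∀ t x, ‖f t x‖ ≤ L) :
    ∃ α : ℝ → E, α t₀ = x₀ ∧ ∀ t ∈ Ioo tmin tmax, HasDerivAt α (f t (α t)) t := by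
  have hlen : 0 ≤ max (tmax - t₀) (t₀ - tmin) := le_max_of_le_left (by linarith [t₀.2.2])
  have hf : IsPicardLindelof f t₀ x₀ (L.toNNReal * (max (tmax - t₀) (t₀ - tmin)).toNNReal) 0
      L.toNNReal K :=
    { lipschitzOnWith := fun t _ => (hlip t).lipschitzOnWith
      continuousOn := fun x _ => (hcont x).continuousOn
      norm_le := fun t _ x _ => (hnorm t x).trans (Real.le_coe_toNNReal L)
      mul_max_le := by rw [NNReal.coe_mul, Real.coe_toNNReal _ hlen, NNReal.coe_zero, sub_zero] }
  obtain ⟨α, hα₀, hα⟩ := hf.exists_eq_forall_mem_Icc_hasDerivWithinAt₀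
  exact ⟨α, hα₀, fun t ht =>
    (hα t (Ioo_subset_Icc_self ht)).hasDerivAt (Icc_mem_nhds ht.1 ht.2)⟩

end ODE

theorem strictAntiOn_re_of_hasDerivAt {w w' : ℝ → ℂ} {s : Set ℝ} (hs : Convex ℝ s)
    (hw : ∀ t ∈ s, HasDerivAt w (w' t) t) (hneg : ∀ t ∈ interior s, (w' t).re < 0) :
    StrictAntiOn (fun t => (w t).re) s := by
  have hre : ∀ t ∈ s, HasDerivAt (fun t => (w t).re) (w' t).re t := fun t ht =>
    reCLM.hasFDerivAt.comp_hasDerivAt t (hw t ht)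
  refine strictAntiOn_of_deriv_neg hs (fun t ht => (hre t ht).continuousAt.continuousWithinAt)
    fun t ht => ?_
  rw [(hre t (interior_subset ht)).deriv]
  exact hneg t ht

lemma lipschitzWith_comp_exp_clampRe {F : Type*} [NormedAddCommGroup F] [NormedSpace ℂ F]
    {g : ℂ → F} {r M c : ℝ} (hg : DifferentiableOn ℂ g (ball 0 r))
    (hM : ∀ y ∈ ball 0 r, ‖g y‖ ≤ M) (hc : Real.exp c < r) :
    LipschitzWith (Real.toNNReal (2 * M / (r - Real.exp c)) * Real.toNNReal (Real.exp c))
      (fun w => g (exp (clampRe c w))) := by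
  have hexp : MapsTo exp {z : ℂ | z.re ≤ c} (closedBall 0 (Real.exp c)) := fun z hz => by
    rw [mem_closedBall_zero_iff, norm_exp]
    exact Real.exp_le_exp.2 hz
  rw [← lipschitzOnWith_univ]
  simpa only [mul_one, Function.comp_def] using ((lipschitzOnWith_closedBall_of_differentiableOn_ball hc hg hM).comp
    (lipschitzOnWith_exp_of_re_le c) hexp).comp (lipschitzWith_clampRe c).lipschitzOnWith
    fun w _ => clampRe_re_le c w

theorem exists_forall_mem_Ioo_hasDerivAt_one_add_comp_exp_clampRe {ρ r M c : ℝ}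
    {R : ℂ × ℂ → ℂ} (hR : DifferentiableOn ℂ R {p : ℂ × ℂ | ‖p.1‖ < ρ ∧ ‖p.2‖ < r})
    (hM : ∀ p : ℂ × ℂ, ‖p.1‖ < ρ → ‖p.2‖ < r → ‖R p‖ ≤ M) (hc : Real.exp c < r)
    {x : ℝ → ℂ} (hx : Continuous x) (hxρ : ∀ t, ‖x t‖ < ρ) (k : ℂ)
    {tmin tmax : ℝ} (t₀ : Icc tmin tmax) (w₀ : ℂ) :
    ∃ w : ℝ → ℂ, w t₀ = w₀ ∧ ∀ t ∈ Ioo tmin tmax,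
      HasDerivAt w (k * (1 + R (x t, exp (clampRe c (w t))))) t := by
  have hy : ∀ w, ‖exp (clampRe c w)‖ < r := fun w => (norm_exp_clampRe_le c w).trans_lt hc
  have hslice : ∀ t, DifferentiableOn ℂ (fun y => R (x t, y)) (ball 0 r) := fun t =>
    hR.comp ((differentiable_const _).prodMk differentiable_id).differentiableOn
      fun y hy => ⟨hxρ t, mem_ball_zero_iff.1 hy⟩
  refine exists_forall_mem_Ioo_hasDerivAt_of_lipschitzWith_of_norm_le
    (f := fun t w => k * (1 + R (x t, exp (clampRe c w)))) t₀ w₀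
    (fun t => (lipschitzWith_smul k).comp ((isometry_add_left 1).lipschitz.comp
      (lipschitzWith_comp_exp_clampRe (hslice t)
        (fun y hy => hM (x t, y) (hxρ t) (mem_ball_zero_iff.1 hy)) hc)))
    (fun w => continuous_const.mul (continuous_const.add
      (hR.continuousOn.comp_continuous (hx.prodMk continuous_const) fun t => ⟨hxρ t, hy w⟩)))
    (L := ‖k‖ * (1 + M)) fun t w => ?_
  rw [norm_mul]
  gcongr
  exact (norm_add_le _ _).trans (by rw [norm_one]; gcongr; exact hM _ (hxρ t) (hy w))

theorem ray_lifts_completely_general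
    (lam : ℂ) (hlam : lam ≠ 0)
    (a : ℕ)
    (ρ r : ℝ) (hρ : 0 < ρ) (hr : 0 < r)
    (NR : ℝ) (hNR : 0 ≤ NR)
    (δ : ℝ) (hδπ : δ < Real.pi / 2)
    (hcos : NR * ρ ^ a < Real.cos δ)
    (R : ℂ × ℂ → ℂ)
    (hRhol : DifferentiableOn ℂ R
      {p : ℂ × ℂ | ‖p.1‖ < ρ ∧ ‖p.2‖ < r})
    (hRbound : ∀ p : ℂ × ℂ, ‖p.1‖ < ρ → ‖p.2‖ < r →
      ‖R p‖ ≤ NR * ‖p.1‖ ^ a)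
    (β : ℝ) (hβ : |β| ≤ δ)
    (θ : ℂ) (hθ : θ = -lam / (‖lam‖ : ℂ) * Complex.exp (β * Complex.I))
    (z₀ w₀ : ℂ) (hw₀ : w₀.re < Real.log r)
    (T : ℝ) (hT : 0 < T)
    (hray : ∀ t ∈ Set.Icc (0:ℝ) T, (z₀ + (t:ℂ) * θ).re < Real.log ρ) :
    ∃ w : ℝ → ℂ, w 0 = w₀
      ∧ (∀ t ∈ Set.Icc (0:ℝ) T,
          HasDerivAt w
            (θ / lam * (1 + R (Complex.exp (z₀ + (t:ℂ) * θ), Complex.exp (w t)))) t)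
      ∧ StrictAntiOn (fun t => (w t).re) (Set.Icc (0:ℝ) T)
      ∧ ∀ t ∈ Set.Icc (0:ℝ) T, (w t).re < Real.log r := by
  obtain ⟨c, hw₀c, hcr⟩ := exists_between hw₀
  have hc : Real.exp c < r := (Real.lt_log_iff_exp_lt hr).1 hcr
  set x : ℝ → ℂ := fun t => exp (z₀ + (projIcc 0 T hT.le t : ℝ) * θ)
  have hx : Continuous x := by fun_prop
  have hxρ : ∀ t, ‖x t‖ < ρ := fun t => by
    rw [norm_exp, ← Real.lt_log_iff_exp_lt hρ]
    exact hray _ (projIcc 0 T hT.le t).2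
  have hRM : ∀ p : ℂ × ℂ, ‖p.1‖ < ρ → ‖p.2‖ < r → ‖R p‖ ≤ NR * ρ ^ a := fun p h₁ h₂ =>
    (hRbound p h₁ h₂).trans (by gcongr)
  obtain ⟨w, hw₀', hw⟩ := exists_forall_mem_Ioo_hasDerivAt_one_add_comp_exp_clampRe hRhol hRM hc
    hx hxρ (θ / lam) (tmin := -1) (tmax := T + 1) ⟨0, by constructor <;> linarith⟩ w₀
  have hcosβ : Real.cos δ ≤ Real.cos β := by
    rw [← Real.cos_abs β]
    exact Real.cos_le_cos_of_nonneg_of_le_pi (abs_nonneg β) (by linarith [Real.pi_pos]) hβ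
  have hanti : StrictAntiOn (fun t => (w t).re) (Icc 0 T) :=
    strictAntiOn_re_of_hasDerivAt (convex_Icc 0 T)
      (fun t ht => hw t ⟨by linarith [ht.1], by linarith [ht.2]⟩) fun t _ => by
        rw [hθ]
        refine re_neg_div_norm_mul_exp_div_mul_one_add_neg hlam ?_
        exact (hRM _ (hxρ t) ((norm_exp_clampRe_le c _).trans_lt hc)).trans_lt
          (hcos.trans_le hcosβ)
  have hwc : ∀ t ∈ Icc 0 T, (w t).re ≤ c := fun t ht =>
    (hanti.antitoneOn (left_mem_Icc.2 hT.le) ht ht.1).trans (hw₀' ▸ hw₀c.le)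
  refine ⟨w, hw₀', fun t ht => ?_, hanti, fun t ht => (hwc t ht).trans_lt hcr⟩
  simpa [x, projIcc_of_mem hT.le ht, clampRe_of_re_le (hwc t ht)] using
    hw t ⟨by linarith [ht.1], by linarith [ht.2]⟩

/-- Outgoing rays of a stability beam lift completely inside the domain: for `R`
holomorphic on the polydisc with `|R(x,y)| ≤ N_R|x|^a`, `cos δ > N_R ρ^a`, and a ray
`t ↦ z₀ + tθ` of direction `θ = ϑ exp(iβ)`, `ϑ = −λ/|λ|`, `|β| ≤ δ`, staying in
`{Re z < log ρ}`, there is a lift `w` with `w(0) = w₀`, solving the tangency ODE,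
whose real part is strictly decreasing; in particular `Re (w t) < log r` throughout. -/
theorem ray_lifts_completely
    (lam : ℂ) (hlam : lam ≠ 0)
    (a : ℕ) (ha : 0 < a)
    (ρ r : ℝ) (hρ : 0 < ρ) (hr : 0 < r)
    (NR : ℝ) (hNR : 0 ≤ NR)
    (δ : ℝ) (hδ0 : 0 < δ) (hδπ : δ < Real.pi / 2)
    (hcos : NR * ρ ^ a < Real.cos δ)
    (R : ℂ × ℂ → ℂ)
    (hRhol : DifferentiableOn ℂ R
      {p : ℂ × ℂ | ‖p.1‖ < ρ ∧ ‖p.2‖ < r})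
    (hRbound : ∀ p : ℂ × ℂ, ‖p.1‖ < ρ → ‖p.2‖ < r →
      ‖R p‖ ≤ NR * ‖p.1‖ ^ a)
    (β : ℝ) (hβ : |β| ≤ δ)
    (θ : ℂ) (hθ : θ = -lam / (‖lam‖ : ℂ) * Complex.exp (β * Complex.I))
    (z₀ w₀ : ℂ) (hz₀ : z₀.re < Real.log ρ) (hw₀ : w₀.re < Real.log r)
    (T : ℝ) (hT : 0 < T)
    (hray : ∀ t ∈ Set.Icc (0:ℝ) T, (z₀ + (t:ℂ) * θ).re < Real.log ρ) :
    ∃ w : ℝ → ℂ, w 0 = w₀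
      ∧ (∀ t ∈ Set.Icc (0:ℝ) T,
          HasDerivAt w
            (θ / lam * (1 + R (Complex.exp (z₀ + (t:ℂ) * θ), Complex.exp (w t)))) t)
      ∧ StrictAntiOn (fun t => (w t).re) (Set.Icc (0:ℝ) T)
      ∧ ∀ t ∈ Set.Icc (0:ℝ) T, (w t).re < Real.log r :=
  ray_lifts_completely_general lam hlam a ρ r hρ hr NR hNR δ hδπ hcos R hRhol hRbound β hβ θ hθ z₀
    w₀ hw₀ T hT hray
end

section
/- Let λ < 0 be a real number and let a be a real number with a + 1/λ ≥ 0 (equivalently a ≥ 1/|λ|). Fix z*, w* ∈ ℂ and define T_{n,m}(z) := exp(m·w* + n·z)·( exp((n + m/λ)(z* − z)) − 1 )/(n + m/λ) when c := n + m/λ ≠ 0. Then for all integers n ≥ a and m ≥ 1 with c = n + m/λ ≠ 0, and all z ∈ ℂ with Re z ≤ 0: |T_{n,m}(z)| ≤ (2/|c|)·exp(m·Re w*)·exp(|c|·|Re z*|)·exp(Re z/|λ|). In particular each individual non-resonant characteristic T_{n,m}(z) is O(|exp(−z/λ)|) as Re z → −∞. -/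
/-!
Since `‖e^w - 1‖ ≤ e^{Re w} + 1`, the norm of `T_{n,m}(z)` is at most `1/|c|` times the sum of
`exp (m Re w* + n Re z + c (Re z* - Re z))` and `exp (m Re w* + n Re z)`. The coefficients
of `Re z` in these exponents are `n - c = m/|λ|` and `n`, both at least `1/|λ|`; as `Re z ≤ 0`,
each exponent is therefore at most `m Re w* + |c| |Re z*| + Re z/|λ|`.
-/

open Complex in
lemma norm_exp_mul_exp_sub_one_le (p q : ℂ) :
    ‖exp p * (exp q - 1)‖ ≤ Real.exp (p.re + q.re) + Real.exp p.re := by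
  calc ‖exp p * (exp q - 1)‖ ≤ Real.exp p.re * (Real.exp q.re + 1) := by
        rw [norm_mul, norm_exp]
        gcongr
        simpa only [norm_exp, norm_one] using norm_sub_le (exp q) 1
    _ = Real.exp (p.re + q.re) + Real.exp p.re := by rw [Real.exp_add]; ring

lemma Real.exp_add_exp_le_two_mul_exp {u v b : ℝ} (hu : u ≤ b) (hv : v ≤ b) :
    Real.exp u + Real.exp v ≤ 2 * Real.exp b := by
  linarith [Real.exp_le_exp.mpr hu, Real.exp_le_exp.mpr hv]

lemma one_div_abs_le_of_add_one_div_nonneg {lam a : ℝ} (hlam : lam < 0)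
    (ha : 0 ≤ a + 1 / lam) : 1 / |lam| ≤ a := by
  rw [abs_of_neg hlam, one_div_neg_eq_neg_one_div]
  linarith

lemma one_div_abs_le_neg_div_of_neg {lam m : ℝ} (hlam : lam < 0) (hm : 1 ≤ m) :
    1 / |lam| ≤ -(m / lam) := by
  rw [← div_neg, ← abs_of_neg hlam]
  exact div_le_div_of_nonneg_right hm (abs_nonneg lam)

theorem nonresonant_characteristic_bound_general
    (lam : ℝ) (hlam : lam < 0)
    (a : ℝ) (ha : 0 ≤ a + 1 / lam)
    (zs ws : ℂ) (n m : ℕ) (hn : a ≤ (n : ℝ)) (hm : 1 ≤ m)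
    (c : ℝ) (hc : c = (n : ℝ) + (m : ℝ) / lam)
    (z : ℂ) (hz : z.re ≤ 0) :
    ‖Complex.exp ((m : ℂ) * ws + (n : ℂ) * z)
        * (Complex.exp ((c : ℂ) * (zs - z)) - 1) / (c : ℂ)‖
      ≤ 2 / |c| * Real.exp ((m : ℝ) * ws.re) * Real.exp (|c| * |zs.re|)
        * Real.exp (z.re / |lam|) := by
  have hdecay_n : n * z.re ≤ z.re / |lam| := by
    rw [← one_div_mul_eq_div]
    exact mul_le_mul_of_nonpos_right
      ((one_div_abs_le_of_add_one_div_nonneg hlam ha).trans hn) hz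
  have hdecay_nc : (n - c) * z.re ≤ z.re / |lam| := by
    rw [← one_div_mul_eq_div, hc, sub_add_cancel_left]
    exact mul_le_mul_of_nonpos_right
      (one_div_abs_le_neg_div_of_neg hlam (by exact_mod_cast hm)) hz
  have hczs : c * zs.re ≤ |c| * |zs.re| := abs_mul c zs.re ▸ le_abs_self _
  have hre : ((m : ℂ) * ws + (n : ℂ) * z).re = m * ws.re + n * z.re := by simp
  have hre' : ((c : ℂ) * (zs - z)).re = c * (zs.re - z.re) := by simp
  rw [norm_div, Complex.norm_real, Real.norm_eq_abs]
  calc _ ≤ (Real.exp (m * ws.re + n * z.re + c * (zs.re - z.re))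
          + Real.exp (m * ws.re + n * z.re)) / |c| := by
        gcongr
        simpa only [hre, hre'] using
          norm_exp_mul_exp_sub_one_le ((m : ℂ) * ws + n * z) (c * (zs - z))
    _ ≤ 2 * Real.exp (m * ws.re + |c| * |zs.re| + z.re / |lam|) / |c| := by
        gcongr
        apply Real.exp_add_exp_le_two_mul_exp <;>
          linarith [mul_nonneg (abs_nonneg c) (abs_nonneg zs.re)]
    _ = _ := by rw [Real.exp_add, Real.exp_add]; ring

/-- Bound on an individual non-resonant characteristic: for `λ < 0` real,
`a + 1/λ ≥ 0`, `n ≥ a`, `m ≥ 1` and `c = n + m/λ ≠ 0`, the characteristic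
`T_{n,m}(z) = exp(m w* + n z)(exp(c(z* − z)) − 1)/c` satisfies, for `Re z ≤ 0`,
`|T_{n,m}(z)| ≤ (2/|c|)·exp(m Re w*)·exp(|c||Re z*|)·exp(Re z/|λ|)`,
i.e. it is `O(|exp(−z/λ)|)`. -/
theorem nonresonant_characteristic_bound
    (lam : ℝ) (hlam : lam < 0)
    (a : ℝ) (ha : 0 ≤ a + 1 / lam)
    (zs ws : ℂ) (n m : ℕ) (hn : a ≤ (n : ℝ)) (hm : 1 ≤ m)
    (c : ℝ) (hc : c = (n : ℝ) + (m : ℝ) / lam) (hc0 : c ≠ 0)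
    (z : ℂ) (hz : z.re ≤ 0) :
    ‖Complex.exp ((m : ℂ) * ws + (n : ℂ) * z)
        * (Complex.exp ((c : ℂ) * (zs - z)) - 1) / (c : ℂ)‖
      ≤ 2 / |c| * Real.exp ((m : ℝ) * ws.re) * Real.exp (|c| * |zs.re|)
        * Real.exp (z.re / |lam|) :=
  nonresonant_characteristic_bound_general lam hlam a ha zs ws n m hn hm c hc z hz
end

section
/- Let ρ > 0, let N be a positive integer, and let g be holomorphic on an open disc {x ∈ ℂ : |x| < ρ''} with ρ'' > ρ; set C := sup_{0 < |x| ≤ ρ} |g(x) − g(0)|/|x| (which is finite). Then for all z, z* ∈ ℂ with Re z* ≤ log ρ, Re(z* − z) ≥ 1 and |Im(z* − z)| ≤ πN, one has | ∫₀¹ g( exp( z + t(z* − z) ) )·(z* − z) dt − g(0)·(z* − z) | ≤ C·exp(Re z*)·√(1 + π²N²). (This is the regular-part estimate: the characteristic of the regular part G₀ along the model leaf equals G₀(0)(z* − z) + O(exp z) as Re z → −∞ with bounded imaginary part.) -/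
/-!
On the segment `z + t w` (`w = z* − z`, `0 ≤ t ≤ 1`) one has `|exp(z + t w)| = exp(Re z + t Re w)
≤ exp(Re z*) ≤ ρ`, so the integrand differs from `g(0) w` by at most `C |w| exp(Re z + t Re w)`.
Integrating the exponential gives at most `C exp(Re z*) |w| / Re w`, and `|w| ≤ Re w · √(1 + π²N²)`
since `Re w ≥ 1` and `|Im w| ≤ πN`. The constant `C` is finite because `dslope g 0` is holomorphic,
hence bounded on the closed disc of radius `ρ`.
-/

open Metric Complex

theorem exists_norm_sub_le_mul_norm_of_differentiableOn_ball {E : Type*} [NormedAddCommGroup E]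
    [NormedSpace ℂ E] [CompleteSpace E] {f : ℂ → E} {r R : ℝ} (hr : 0 ≤ r) (hrR : r < R)
    (hf : DifferentiableOn ℂ f (ball 0 R)) :
    ∃ M, ∀ x : ℂ, ‖x‖ ≤ r → ‖f x - f 0‖ ≤ M * ‖x‖ := by
  have hslope : ContinuousOn (dslope f 0) (closedBall 0 r) :=
    ((differentiableOn_dslope (ball_mem_nhds 0 (hr.trans_lt hrR))).2 hf).continuousOn.mono
      (closedBall_subset_ball hrR)
  obtain ⟨M, hM⟩ := (isCompact_closedBall (0 : ℂ) r).exists_bound_of_continuousOn hslope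
  refine ⟨M, fun x hx => ?_⟩
  rw [← sub_smul_dslope, sub_zero, norm_smul, mul_comm]
  exact mul_le_mul_of_nonneg_right (hM x (mem_closedBall_zero_iff.2 hx)) (norm_nonneg x)

theorem norm_sub_le_sSup_mul_norm {E F : Type*} [NormedAddCommGroup E] [NormedAddCommGroup F]
    {f : E → F} {r M : ℝ} (hM : ∀ x, ‖x‖ ≤ r → ‖f x - f 0‖ ≤ M * ‖x‖) {x : E} (hx : ‖x‖ ≤ r) :
    ‖f x - f 0‖ ≤
      sSup {c : ℝ | ∃ x : E, 0 < ‖x‖ ∧ ‖x‖ ≤ r ∧ c = ‖f x - f 0‖ / ‖x‖} * ‖x‖ := by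
  rcases (norm_nonneg x).eq_or_lt with hx0 | hx0
  · rw [← hx0, norm_eq_zero.1 hx0.symm, sub_self, norm_zero, mul_zero]
  have hbdd : BddAbove {c : ℝ | ∃ x : E, 0 < ‖x‖ ∧ ‖x‖ ≤ r ∧ c = ‖f x - f 0‖ / ‖x‖} := by
    refine ⟨M, ?_⟩
    rintro _ ⟨y, hy0, hyr, rfl⟩
    exact (div_le_iff₀ hy0).2 (hM y hyr)
  rw [← div_le_iff₀ hx0]
  exact le_csSup hbdd ⟨x, hx0, hx, rfl⟩

theorem integral_exp_add_mul_le {a b : ℝ} (hb : 0 < b) :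
    ∫ t in (0 : ℝ)..1, Real.exp (a + b * t) ≤ Real.exp (a + b) / b := by
  rw [intervalIntegral.integral_comp_add_mul _ hb.ne', integral_exp, smul_eq_mul, mul_zero,
    add_zero, mul_one, inv_mul_eq_div]
  gcongr
  linarith [Real.exp_pos a]

theorem Complex.norm_le_re_mul_sqrt {w : ℂ} {K : ℝ} (hre : 0 ≤ w.re) (him : |w.im| ≤ K * w.re) :
    ‖w‖ ≤ w.re * √(1 + K ^ 2) := by
  rw [← Real.sqrt_sq hre, ← Real.sqrt_mul (sq_nonneg _), ← Real.sqrt_sq (norm_nonneg w)]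
  gcongr
  rw [Complex.sq_norm, Complex.normSq_apply]
  nlinarith [sq_abs w.im, abs_nonneg w.im]

theorem norm_integral_comp_exp_sub_le {f : ℂ → ℂ} {C : ℝ} {z zs : ℂ} (hzs : 0 < (zs - z).re)
    (hf_cont : ContinuousOn f (closedBall 0 (Real.exp zs.re)))
    (hf : ∀ x : ℂ, ‖x‖ ≤ Real.exp zs.re → ‖f x - f 0‖ ≤ C * ‖x‖) :
    ‖(∫ t in (0 : ℝ)..1, f (exp (z + t * (zs - z))) * (zs - z)) - f 0 * (zs - z)‖
      ≤ C * Real.exp zs.re * (‖zs - z‖ / (zs - z).re) := by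
  set w := zs - z
  have hnorm : ∀ t : ℝ, ‖exp (z + t * w)‖ = Real.exp (z.re + w.re * t) := fun t => by
    rw [norm_exp]; simp [mul_comm]
  have hle : ∀ t ∈ Set.Icc (0 : ℝ) 1, ‖exp (z + t * w)‖ ≤ Real.exp zs.re := fun t ht => by
    rw [hnorm]
    gcongr
    have : zs.re = z.re + w.re := by simp [w]
    nlinarith [ht.2]
  have hC : 0 ≤ C := nonneg_of_mul_nonneg_left
    ((norm_nonneg _).trans (hf (exp zs) (norm_exp zs).le)) (by rw [norm_exp]; positivity)
  have hint :
      IntervalIntegrable (fun t : ℝ => f (exp (z + t * w)) * w) MeasureTheory.volume 0 1 := by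
    apply ContinuousOn.intervalIntegrable
    rw [Set.uIcc_of_le zero_le_one]
    refine (hf_cont.comp (by fun_prop) fun t ht => ?_).mul continuousOn_const
    exact mem_closedBall_zero_iff.2 (hle t ht)
  have hsub : (∫ t in (0 : ℝ)..1, f (exp (z + t * w)) * w) - f 0 * w
      = ∫ t in (0 : ℝ)..1, (f (exp (z + t * w)) - f 0) * w := by
    simp_rw [sub_mul]
    rw [intervalIntegral.integral_sub hint intervalIntegrable_const]
    simp
  have hpointwise : ∀ t ∈ Set.Ioc (0 : ℝ) 1,
      ‖(f (exp (z + t * w)) - f 0) * w‖ ≤ C * ‖w‖ * Real.exp (z.re + w.re * t) := fun t ht => by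
    rw [norm_mul, ← hnorm, mul_right_comm]
    gcongr
    exact hf _ (hle t (Set.Ioc_subset_Icc_self ht))
  calc ‖(∫ t in (0 : ℝ)..1, f (exp (z + t * w)) * w) - f 0 * w‖
      ≤ ∫ t in (0 : ℝ)..1, C * ‖w‖ * Real.exp (z.re + w.re * t) := by
        rw [hsub]
        exact intervalIntegral.norm_integral_le_of_norm_le zero_le_one
          (.of_forall hpointwise) (Continuous.intervalIntegrable (by fun_prop) _ _)
    _ ≤ C * ‖w‖ * (Real.exp (z.re + w.re) / w.re) := by
        rw [intervalIntegral.integral_const_mul]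
        gcongr
        exact integral_exp_add_mul_le hzs
    _ = C * Real.exp zs.re * (‖w‖ / w.re) := by
        simp only [w, sub_re, add_sub_cancel]
        ring

theorem regular_part_estimate_general
    (ρ : ℝ) (hρ : 0 < ρ)
    (N : ℕ)
    (ρ'' : ℝ) (hρ'' : ρ < ρ'')
    (g : ℂ → ℂ) (hg : DifferentiableOn ℂ g {x : ℂ | ‖x‖ < ρ''})
    (C : ℝ)
    (hC : C = sSup {c : ℝ | ∃ x : ℂ, 0 < ‖x‖ ∧ ‖x‖ ≤ ρ ∧
      c = ‖g x - g 0‖ / ‖x‖}) :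
    ∀ z zs : ℂ, zs.re ≤ Real.log ρ → 1 ≤ (zs - z).re →
      |(zs - z).im| ≤ Real.pi * N →
      ‖(∫ t in (0:ℝ)..1, g (Complex.exp (z + (t:ℂ) * (zs - z))) * (zs - z))
            - g 0 * (zs - z)‖
        ≤ C * Real.exp zs.re * Real.sqrt (1 + Real.pi ^ 2 * (N : ℝ) ^ 2) := by
  intro z zs hzs hre him
  have hg_ball : DifferentiableOn ℂ g (ball 0 ρ'') := by simpa [ball] using hg
  obtain ⟨M, hM⟩ := exists_norm_sub_le_mul_norm_of_differentiableOn_ball hρ.le hρ'' hg_ball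
  have hexp : Real.exp zs.re ≤ ρ := (Real.exp_le_exp.2 hzs).trans_eq (Real.exp_log hρ)
  have hC_lip (x : ℂ) (hx : ‖x‖ ≤ Real.exp zs.re) : ‖g x - g 0‖ ≤ C * ‖x‖ :=
    hC ▸ norm_sub_le_sSup_mul_norm hM (hx.trans hexp)
  have hg_cont : ContinuousOn g (closedBall 0 (Real.exp zs.re)) :=
    hg_ball.continuousOn.mono (closedBall_subset_ball (hexp.trans_lt hρ''))
  have hw : ‖zs - z‖ / (zs - z).re ≤ √(1 + Real.pi ^ 2 * (N : ℝ) ^ 2) := by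
    rw [div_le_iff₀ (by linarith), mul_comm, ← mul_pow]
    refine norm_le_re_mul_sqrt (by linarith) (him.trans ?_)
    exact le_mul_of_one_le_right (by positivity) hre
  have hC0 : 0 ≤ C := hC ▸ Real.sSup_nonneg (by rintro _ ⟨x, -, -, rfl⟩; positivity)
  calc _ ≤ C * Real.exp zs.re * (‖zs - z‖ / (zs - z).re) :=
        norm_integral_comp_exp_sub_le (by linarith) hg_cont hC_lip
    _ ≤ _ := by gcongr

/-- Regular-part estimate: for `g` holomorphic on a disc of radius `ρ'' > ρ` and
`C := sup_{0<|x|≤ρ} |g(x) − g(0)|/|x|`, the characteristic of `g` along the model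
leaf over the segment from `z` to `z*` equals `g(0)(z* − z) + O(exp z)`:
if `Re z* ≤ log ρ`, `Re(z* − z) ≥ 1` and `|Im(z* − z)| ≤ πN`, then
`|∫₀¹ g(exp(z + t(z*−z)))(z*−z) dt − g(0)(z*−z)| ≤ C·exp(Re z*)·√(1 + π²N²)`. -/
theorem regular_part_estimate
    (ρ : ℝ) (hρ : 0 < ρ)
    (N : ℕ) (hN : 0 < N)
    (ρ'' : ℝ) (hρ'' : ρ < ρ'')
    (g : ℂ → ℂ) (hg : DifferentiableOn ℂ g {x : ℂ | ‖x‖ < ρ''})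
    (C : ℝ)
    (hC : C = sSup {c : ℝ | ∃ x : ℂ, 0 < ‖x‖ ∧ ‖x‖ ≤ ρ ∧
      c = ‖g x - g 0‖ / ‖x‖}) :
    ∀ z zs : ℂ, zs.re ≤ Real.log ρ → 1 ≤ (zs - z).re →
      |(zs - z).im| ≤ Real.pi * N →
      ‖(∫ t in (0:ℝ)..1, g (Complex.exp (z + (t:ℂ) * (zs - z))) * (zs - z))
            - g 0 * (zs - z)‖
        ≤ C * Real.exp zs.re * Real.sqrt (1 + Real.pi ^ 2 * (N : ℝ) ^ 2) :=
  regular_part_estimate_general ρ hρ N ρ'' hρ'' g hg C hC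
end

section
/- Let λ ∈ ℂ with Im λ ≠ 0, let a be a positive integer with Re(a + 1/λ) ≥ 0, let ρ, r, ε, C > 0, let N be a positive integer, and let z*, w* ∈ ℂ with Re z* ≤ log ρ and Re w* ≤ log r. Let (G_{n,m})_{(n,m) ∈ ℕ²} be complex numbers with |G_{n,m}| ≤ C·(ρ+ε)^{−n}·(r+ε)^{−m} for all n, m. Then there exists M > 0 such that for every z ∈ ℂ satisfying Re z ≤ min(0, log ρ), |Im(z − z*)| ≤ Nπ and Re((z* − z)/λ) ≤ 0, the double series Σ_{n ≥ a, m ≥ 1} G_{n,m}·T_{n,m}(z) converges absolutely and | Σ_{n ≥ a, m ≥ 1} G_{n,m}·T_{n,m}(z) | ≤ M·exp(Re(−z/λ)). (For non-real λ the non-regular part of the characteristic along the model leaf is O(|exp(−z/λ)|) as Re z → −∞ with bounded imaginary part.) -/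
/-! For `m ≥ 1` and non-real `λ` the divisor `μ = n + m/λ` satisfies `|μ| ≥ |Im μ| ≥ |Im (1/λ)|`,
so the small divisors of the model foliation stay away from `0`. Writing
`T_{n,m}(z) = (e^{m w* + n z + μ (z* − z)} − e^{m w* + n z}) / μ`, the first exponential equals
`e^{m w* + n z* + m (z* − z)/λ}` and is at most `r^m ρ^n e^{Re((z* − z)/λ)}` since `Re((z* − z)/λ) ≤ 0`;
for the second, `Re z ≤ 0` and `a + Re(1/λ) ≥ 0` give
`a Re z ≤ −Re z · Re(1/λ) = Re(−z/λ) − Im z · Im(1/λ)`, and `Im z` is bounded on the band. Both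
terms are thus `O(ρ^n r^m e^{Re(−z/λ)})`, and the Cauchy estimates for `G` leave a convergent
geometric double series. -/

open Complex

-- `T_{n,m}(z)`; the resonant case `n + m/λ = 0` cannot occur for `λ ∉ ℝ` and `m ≥ 1`.
noncomputable def modelCharacteristic (lam zs ws z : ℂ) (n m : ℕ) : ℂ :=
  Complex.exp ((m : ℂ) * ws + (n : ℂ) * z)
    * (Complex.exp (((n : ℂ) + (m : ℂ) / lam) * (zs - z)) - 1) / ((n : ℂ) + (m : ℂ) / lam)

lemma norm_exp_mul_exp_sub_one_le_s15 (u v : ℂ) :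
    ‖Complex.exp u * (Complex.exp v - 1)‖ ≤ Real.exp (u + v).re + Real.exp u.re := by
  calc ‖Complex.exp u * (Complex.exp v - 1)‖ = ‖Complex.exp (u + v) - Complex.exp u‖ := by
        rw [Complex.exp_add, mul_sub, mul_one]
    _ ≤ ‖Complex.exp (u + v)‖ + ‖Complex.exp u‖ := norm_sub_le _ _
    _ = Real.exp (u + v).re + Real.exp u.re := by rw [Complex.norm_exp, Complex.norm_exp]

section ModelLeaf

variable {lam zs ws z : ℂ} {ρ r : ℝ} {a n m : ℕ}

lemma abs_inv_im_pos (hlam : lam.im ≠ 0) : 0 < |lam⁻¹.im| := by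
  have : lam ≠ 0 := by rintro rfl; simp at hlam
  simp [inv_im, hlam, this]

lemma abs_inv_im_le_norm_natCast_add_div (n : ℕ) (hm : 1 ≤ m) :
    |lam⁻¹.im| ≤ ‖(n : ℂ) + m / lam‖ := by
  have him : ((n : ℂ) + m / lam).im = m * lam⁻¹.im := by simp [div_eq_mul_inv]
  calc |lam⁻¹.im| ≤ m * |lam⁻¹.im| :=
        le_mul_of_one_le_left (abs_nonneg _) (by exact_mod_cast hm)
    _ = |((n : ℂ) + m / lam).im| := by rw [him, abs_mul, Nat.abs_cast]
    _ ≤ ‖(n : ℂ) + m / lam‖ := abs_im_le_norm _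

lemma mul_re_le_re_neg_div_add {x : ℝ} (hx : 0 ≤ x + lam⁻¹.re) (hz : z.re ≤ 0) :
    x * z.re ≤ (-z / lam).re + |z.im| * |lam⁻¹.im| := by
  have hre : (-z / lam).re = -(z.re * lam⁻¹.re) + z.im * lam⁻¹.im := by
    rw [div_eq_mul_inv, mul_re, neg_re, neg_im]; ring
  have hprod : z.re * (x + lam⁻¹.re) ≤ 0 := mul_nonpos_of_nonpos_of_nonneg hz hx
  have him : -(|z.im| * |lam⁻¹.im|) ≤ z.im * lam⁻¹.im := by
    rw [← abs_mul]; exact neg_abs_le _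
  linarith

lemma re_exponent_add_le (hm : 1 ≤ m) (hzs : zs.re ≤ Real.log ρ) (hws : ws.re ≤ Real.log r)
    (hzlam : ((zs - z) / lam).re ≤ 0) :
    ((m : ℂ) * ws + n * z + (n + m / lam) * (zs - z)).re
      ≤ n * Real.log ρ + m * Real.log r + (zs / lam).re + (-z / lam).re := by
  have hexp : (m : ℂ) * ws + n * z + (n + m / lam) * (zs - z)
      = n * zs + m * ws + m * ((zs - z) / lam) := by ring
  have hsplit : ((zs - z) / lam).re = (zs / lam).re + (-z / lam).re := by
    rw [← add_re]; ring_nf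
  have hdecay : (m : ℝ) * ((zs - z) / lam).re ≤ 1 * ((zs - z) / lam).re :=
    mul_le_mul_of_nonpos_right (by exact_mod_cast hm) hzlam
  rw [hexp]
  simp only [add_re, mul_re, natCast_re, natCast_im, zero_mul, sub_zero]
  linarith [mul_le_mul_of_nonneg_left hzs (Nat.cast_nonneg (α := ℝ) n),
    mul_le_mul_of_nonneg_left hws (Nat.cast_nonneg (α := ℝ) m)]

lemma re_exponent_le {B : ℝ} (ha : 0 ≤ a + lam⁻¹.re) (hn : a ≤ n) (hws : ws.re ≤ Real.log r)
    (hz : z.re ≤ 0) (hzρ : z.re ≤ Real.log ρ) (hB : |z.im| ≤ B) :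
    ((m : ℂ) * ws + n * z).re
      ≤ n * Real.log ρ + m * Real.log r + (B * |lam⁻¹.im| - a * Real.log ρ) + (-z / lam).re := by
  have hkey := mul_re_le_re_neg_div_add ha hz
  have hna : (0 : ℝ) ≤ n - a := by rw [sub_nonneg]; exact_mod_cast hn
  simp only [add_re, mul_re, natCast_re, natCast_im, zero_mul, sub_zero]
  linarith [mul_le_mul_of_nonneg_left hzρ hna, mul_le_mul_of_nonneg_left hB (abs_nonneg lam⁻¹.im),
    mul_le_mul_of_nonneg_left hws (Nat.cast_nonneg (α := ℝ) m)]

lemma norm_modelCharacteristic_le {B : ℝ} (hlam : lam.im ≠ 0) (hρ : 0 < ρ) (hr : 0 < r)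
    (hzs : zs.re ≤ Real.log ρ) (hws : ws.re ≤ Real.log r) (ha : 0 ≤ a + lam⁻¹.re)
    (hn : a ≤ n) (hm : 1 ≤ m) (hz : z.re ≤ 0) (hzρ : z.re ≤ Real.log ρ) (hB : |z.im| ≤ B)
    (hzlam : ((zs - z) / lam).re ≤ 0) :
    ‖modelCharacteristic lam zs ws z n m‖
      ≤ ρ ^ n * r ^ m * ((Real.exp (zs / lam).re
          + Real.exp (B * |lam⁻¹.im| - a * Real.log ρ)) / |lam⁻¹.im| * Real.exp (-z / lam).re) := by
  have hc := abs_inv_im_pos hlam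
  calc ‖modelCharacteristic lam zs ws z n m‖
      = ‖Complex.exp ((m : ℂ) * ws + n * z)
          * (Complex.exp ((n + m / lam) * (zs - z)) - 1)‖ / ‖(n : ℂ) + m / lam‖ := norm_div _ _
    _ ≤ (Real.exp ((m : ℂ) * ws + n * z + (n + m / lam) * (zs - z)).re
          + Real.exp ((m : ℂ) * ws + n * z).re) / |lam⁻¹.im| :=
        div_le_div₀ (by positivity) (norm_exp_mul_exp_sub_one_le_s15 _ _) hc
          (abs_inv_im_le_norm_natCast_add_div n hm)
    _ ≤ (Real.exp (n * Real.log ρ + m * Real.log r + (zs / lam).re + (-z / lam).re)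
          + Real.exp (n * Real.log ρ + m * Real.log r + (B * |lam⁻¹.im| - a * Real.log ρ)
              + (-z / lam).re)) / |lam⁻¹.im| := by
        gcongr
        · exact re_exponent_add_le hm hzs hws hzlam
        · exact re_exponent_le ha hn hws hz hzρ hB
    _ = _ := by
        simp only [Real.exp_add, Real.exp_nat_mul, Real.exp_log hρ, Real.exp_log hr]
        ring

end ModelLeaf

lemma summable_pow_mul_pow {p q : ℝ} (hp₀ : 0 ≤ p) (hp₁ : p < 1) (hq₀ : 0 ≤ q) (hq₁ : q < 1) :
    Summable fun nm : ℕ × ℕ => p ^ nm.1 * q ^ nm.2 :=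
  (summable_geometric_of_lt_one hp₀ hp₁).mul_of_nonneg (summable_geometric_of_lt_one hq₀ hq₁)
    (fun n => pow_nonneg hp₀ n) (fun m => pow_nonneg hq₀ m)

lemma norm_mul_le_of_cauchy_bound {g t : ℂ} {C K ρ r ε : ℝ} {n m : ℕ} (hρε : ρ + ε ≠ 0)
    (hrε : r + ε ≠ 0) (hg : ‖g‖ ≤ C * (ρ + ε) ^ (-(n : ℤ)) * (r + ε) ^ (-(m : ℤ)))
    (ht : ‖t‖ ≤ ρ ^ n * r ^ m * K) :
    ‖g * t‖ ≤ C * K * ((ρ / (ρ + ε)) ^ n * (r / (r + ε)) ^ m) := by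
  calc ‖g * t‖ ≤ C * (ρ + ε) ^ (-(n : ℤ)) * (r + ε) ^ (-(m : ℤ)) * (ρ ^ n * r ^ m * K) := by
        rw [norm_mul]; exact mul_le_mul hg ht (norm_nonneg _) ((norm_nonneg _).trans hg)
    _ = C * K * ((ρ / (ρ + ε)) ^ n * (r / (r + ε)) ^ m) := by
        rw [zpow_neg, zpow_neg, zpow_natCast, zpow_natCast, div_pow, div_pow]
        field_simp

theorem nonreal_nonregular_part_estimate_general
    (lam : ℂ) (hlam : lam.im ≠ 0)
    (a : ℕ) (haRe : 0 ≤ ((a : ℂ) + 1 / lam).re)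
    (ρ r ε C : ℝ) (hρ : 0 < ρ) (hr : 0 < r) (hε : 0 < ε) (hC : 0 < C)
    (N : ℕ)
    (zs ws : ℂ) (hzs : zs.re ≤ Real.log ρ) (hws : ws.re ≤ Real.log r)
    (G : ℕ → ℕ → ℂ)
    (hG : ∀ n m : ℕ, ‖G n m‖ ≤ C * (ρ + ε) ^ (-(n : ℤ)) * (r + ε) ^ (-(m : ℤ))) :
    ∃ M : ℝ, 0 < M ∧ ∀ z : ℂ,
      z.re ≤ min 0 (Real.log ρ) → |(z - zs).im| ≤ (N : ℝ) * Real.pi →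
      ((zs - z) / lam).re ≤ 0 →
      (Summable (fun nm : ℕ × ℕ => ‖
          (if a ≤ nm.1 ∧ 1 ≤ nm.2 then
            G nm.1 nm.2 *
              (Complex.exp ((nm.2 : ℂ) * ws + (nm.1 : ℂ) * z)
                * (Complex.exp (((nm.1 : ℂ) + (nm.2 : ℂ) / lam) * (zs - z)) - 1)
                / ((nm.1 : ℂ) + (nm.2 : ℂ) / lam))
          else 0)‖))
      ∧ ‖(∑' nm : ℕ × ℕ,
          (if a ≤ nm.1 ∧ 1 ≤ nm.2 then
            G nm.1 nm.2 *
              (Complex.exp ((nm.2 : ℂ) * ws + (nm.1 : ℂ) * z)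
                * (Complex.exp (((nm.1 : ℂ) + (nm.2 : ℂ) / lam) * (zs - z)) - 1)
                / ((nm.1 : ℂ) + (nm.2 : ℂ) / lam))
          else 0))‖
        ≤ M * Real.exp ((-z / lam).re) := by
  have hρε : 0 < ρ + ε := by linarith
  have hrε : 0 < r + ε := by linarith
  have ha : 0 ≤ a + lam⁻¹.re := by simpa using haRe
  set B := |zs.im| + N * Real.pi
  set K := (Real.exp (zs / lam).re + Real.exp (B * |lam⁻¹.im| - a * Real.log ρ)) / |lam⁻¹.im|
  have hK : 0 < K := div_pos (by positivity) (abs_inv_im_pos hlam)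
  set g : ℕ × ℕ → ℝ := fun nm => (ρ / (ρ + ε)) ^ nm.1 * (r / (r + ε)) ^ nm.2
  have hg0 : 0 ≤ g := fun nm => by positivity
  have hg : Summable g := summable_pow_mul_pow (by positivity) ((div_lt_one hρε).2 (by linarith))
    (by positivity) ((div_lt_one hrε).2 (by linarith))
  refine ⟨C * K * ∑' nm, g nm, mul_pos (mul_pos hC hK) (hg.tsum_pos hg0 (0, 0) (by simp [g])),
    fun z hz hzim hzlam => ?_⟩
  have hB : |z.im| ≤ B := by
    have := abs_sub_abs_le_abs_sub z.im zs.im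
    rw [sub_im] at hzim
    linarith
  have hbound : ∀ n m, ‖if a ≤ n ∧ 1 ≤ m then G n m * modelCharacteristic lam zs ws z n m else 0‖
      ≤ C * K * Real.exp (-z / lam).re * g (n, m) := by
    intro n m
    split_ifs with hnm
    · refine (norm_mul_le_of_cauchy_bound hρε.ne' hrε.ne' (hG n m)
        (norm_modelCharacteristic_le hlam hρ hr hzs hws ha hnm.1 hnm.2 (le_min_iff.1 hz).1
          (le_min_iff.1 hz).2 hB hzlam)).trans_eq ?_
      ring
    · rw [norm_zero]; have := hg0 (n, m); positivity
  exact ⟨.of_nonneg_of_le (fun _ => norm_nonneg _) (fun nm => hbound nm.1 nm.2) (hg.mul_left _),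
    (tsum_of_norm_bounded (hg.hasSum.mul_left _) (fun nm => hbound nm.1 nm.2)).trans_eq (by ring)⟩

/-- For non-real `λ` the non-regular part of the characteristic along the model
leaf is `O(|exp(−z/λ)|)`: under Cauchy estimates `|G_{n,m}| ≤ C(ρ+ε)^{−n}(r+ε)^{−m}`
the double series `Σ_{n≥a, m≥1} G_{n,m} T_{n,m}(z)` converges absolutely and is
bounded by `M·exp(Re(−z/λ))` on the half-band
`{Re z ≤ min(0, log ρ), |Im(z − z*)| ≤ Nπ, Re((z* − z)/λ) ≤ 0}`. -/
theorem nonreal_nonregular_part_estimate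
    (lam : ℂ) (hlam : lam.im ≠ 0)
    (a : ℕ) (ha : 0 < a) (haRe : 0 ≤ ((a : ℂ) + 1 / lam).re)
    (ρ r ε C : ℝ) (hρ : 0 < ρ) (hr : 0 < r) (hε : 0 < ε) (hC : 0 < C)
    (N : ℕ) (hN : 0 < N)
    (zs ws : ℂ) (hzs : zs.re ≤ Real.log ρ) (hws : ws.re ≤ Real.log r)
    (G : ℕ → ℕ → ℂ)
    (hG : ∀ n m : ℕ, ‖G n m‖ ≤ C * (ρ + ε) ^ (-(n : ℤ)) * (r + ε) ^ (-(m : ℤ))) :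
    ∃ M : ℝ, 0 < M ∧ ∀ z : ℂ,
      z.re ≤ min 0 (Real.log ρ) → |(z - zs).im| ≤ (N : ℝ) * Real.pi →
      ((zs - z) / lam).re ≤ 0 →
      (Summable (fun nm : ℕ × ℕ => ‖
          (if a ≤ nm.1 ∧ 1 ≤ nm.2 then
            G nm.1 nm.2 *
              (Complex.exp ((nm.2 : ℂ) * ws + (nm.1 : ℂ) * z)
                * (Complex.exp (((nm.1 : ℂ) + (nm.2 : ℂ) / lam) * (zs - z)) - 1)
                / ((nm.1 : ℂ) + (nm.2 : ℂ) / lam))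
          else 0)‖))
      ∧ ‖(∑' nm : ℕ × ℕ,
          (if a ≤ nm.1 ∧ 1 ≤ nm.2 then
            G nm.1 nm.2 *
              (Complex.exp ((nm.2 : ℂ) * ws + (nm.1 : ℂ) * z)
                * (Complex.exp (((nm.1 : ℂ) + (nm.2 : ℂ) / lam) * (zs - z)) - 1)
                / ((nm.1 : ℂ) + (nm.2 : ℂ) / lam))
          else 0))‖
        ≤ M * Real.exp ((-z / lam).re) :=
  nonreal_nonregular_part_estimate_general lam hlam a haRe ρ r ε C hρ hr hε hC N zs ws hzs hws G hG
end
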